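/- If 𝐅 is a continuous distribution function on [0,∞) whose survival function 𝐅̄ := 1−𝐅 is positive and regularly varying at infinity with index −1/γ₁ for some γ₁ > 0, then lim_{t→∞} (1/𝐅̄(t)) ∫_{(t,∞)} log(x/t) dμ_𝐅(x) = γ₁, where μ_𝐅 is the Lebesgue–Stieltjes measure of 𝐅. -/

import Mathlib

open MeasureTheory Filter Set Real

/-!
Since `log (x/t) > s` iff `x > t eˢ`, the layer-cake formula turns the tail integral into
`∫_{s>0} 𝐅̄(t eˢ) ds`, so the normalised quantity is `∫_{s>0} 𝐅̄(t eˢ) / 𝐅̄(t) ds`. Regular variation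
gives the pointwise limit `exp (-s/γ₁)`, whose integral is `γ₁`. For domination, regular variation
at `x = e` makes `𝐅̄(e z) ≤ exp (-1/(2γ₁)) 𝐅̄(z)` for large `z`; iterating this along powers of `e`
and using monotonicity between them yields a Potter-type bound `C exp (-s/(2γ₁))`, uniform in
large `t`, so dominated convergence applies.
-/

open scoped Topology

namespace MeasureTheory

theorem setIntegral_log_div_eq_integral_measureReal_Ioi (μ : Measure ℝ) [IsFiniteMeasure μ]
    {t : ℝ} (ht : 0 < t) :
    ∫ x in Ioi t, log (x / t) ∂μ = ∫ s in Ioi 0, μ.real (Ioi (t * exp s)) := by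
  have hnonneg : 0 ≤ᵐ[μ.restrict (Ioi t)] fun x => log (x / t) :=
    ae_restrict_of_forall_mem measurableSet_Ioi fun x hx =>
      log_nonneg ((one_le_div ht).2 (le_of_lt hx))
  have hmeas : Measurable fun x : ℝ => log (x / t) := by fun_prop
  have htail_anti : Antitone fun s => μ.real (Ioi (t * exp s)) := fun a b hab =>
    measureReal_mono (Ioi_subset_Ioi (by gcongr))
  have hlevel : ∀ s ∈ Ioi (0 : ℝ),
      μ.restrict (Ioi t) {x | s < log (x / t)} = μ (Ioi (t * exp s)) := by
    intro s hs
    rw [Measure.restrict_apply (measurableSet_lt measurable_const hmeas)]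
    congr 1
    ext x
    simp only [mem_inter_iff, mem_ofPred_eq, mem_Ioi]
    constructor
    · rintro ⟨hsx, htx⟩
      rwa [lt_log_iff_exp_lt (div_pos (ht.trans htx) ht), lt_div_iff₀' ht] at hsx
    · intro hx
      have htx : t < x := lt_of_le_of_lt (le_mul_of_one_le_right ht.le (one_le_exp hs.le)) hx
      rw [lt_log_iff_exp_lt (div_pos (ht.trans htx) ht), lt_div_iff₀' ht]
      exact ⟨hx, htx⟩
  rw [integral_eq_lintegral_of_nonneg_ae hnonneg hmeas.aestronglyMeasurable,
    integral_eq_lintegral_of_nonneg_ae (ae_of_all _ fun _ => measureReal_nonneg)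
      htail_anti.measurable.aestronglyMeasurable,
    lintegral_eq_lintegral_meas_lt _ hnonneg hmeas.aemeasurable]
  congr 1
  refine setLIntegral_congr_fun measurableSet_Ioi fun s hs => ?_
  rw [hlevel s hs, ofReal_measureReal]

theorem isProbabilityMeasure_of_measure_Iic {μ : Measure ℝ} {F : ℝ → ℝ}
    (hμ : ∀ b, μ (Iic b) = ENNReal.ofReal (F b)) (hF : Tendsto F atTop (𝓝 1)) :
    IsProbabilityMeasure μ := by
  refine ⟨tendsto_nhds_unique (tendsto_measure_Iic_atTop μ) ?_⟩
  simpa only [hμ, ENNReal.ofReal_one, Function.comp_def] using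
    (ENNReal.continuous_ofReal.tendsto 1).comp hF

theorem measureReal_Ioi_eq_one_sub {μ : Measure ℝ} [IsProbabilityMeasure μ] {F : ℝ → ℝ}
    (hμ : ∀ b, μ (Iic b) = ENNReal.ofReal (F b)) {y : ℝ} (hy : 0 ≤ F y) :
    μ.real (Ioi y) = 1 - F y := by
  rw [← compl_Iic, probReal_compl_eq_one_sub measurableSet_Iic, measureReal_def, hμ,
    ENNReal.toReal_ofReal hy]

end MeasureTheory

theorem Antitone.apply_mul_exp_le {g : ℝ → ℝ} (hg : Antitone g) {a T t s : ℝ} (ha : 0 ≤ a)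
    (hT : 0 < T) (hstep : ∀ z ≥ T, g (exp 1 * z) ≤ exp (-a) * g z) (ht : T ≤ t)
    (hgt : 0 ≤ g t) (hs : 0 ≤ s) :
    g (t * exp s) ≤ exp a * exp (-a * s) * g t := by
  have hiter : ∀ n : ℕ, g (t * exp n) ≤ exp (-a * n) * g t := by
    intro n
    induction n with
    | zero => simp
    | succ n ih =>
      have hTn : T ≤ t * exp n :=
        ht.trans (le_mul_of_one_le_right (hT.trans_le ht).le (one_le_exp n.cast_nonneg))
      calc g (t * exp ↑(n + 1)) = g (exp 1 * (t * exp n)) := by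
            rw [Nat.cast_succ, exp_add]; ring_nf
        _ ≤ exp (-a) * g (t * exp n) := hstep _ hTn
        _ ≤ exp (-a) * (exp (-a * n) * g t) := by gcongr
        _ = exp (-a * ↑(n + 1)) * g t := by
            rw [← mul_assoc, ← exp_add]; push_cast; ring_nf
  set n := ⌊s⌋₊
  calc g (t * exp s) ≤ g (t * exp n) :=
        hg (mul_le_mul_of_nonneg_left (exp_le_exp.2 (Nat.floor_le hs)) (hT.trans_le ht).le)
    _ ≤ exp (-a * n) * g t := hiter n
    _ ≤ exp a * exp (-a * s) * g t := by
        rw [← exp_add]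
        refine mul_le_mul_of_nonneg_right (exp_le_exp.2 ?_) hgt
        nlinarith [Nat.lt_floor_add_one s]

section RegularVariation

variable {g : ℝ → ℝ} {γ : ℝ}

theorem eventually_apply_mul_exp_div_le (hγ : 0 < γ) (hg : Antitone g) (hgpos : ∀ z, 0 < g z)
    (hRV : Tendsto (fun z => g (exp 1 * z) / g z) atTop (𝓝 (exp 1 ^ (-(1 / γ))))) :
    ∀ᶠ t in atTop, ∀ s ≥ 0,
      g (t * exp s) / g t ≤ exp (2 * γ)⁻¹ * exp (-(2 * γ)⁻¹ * s) := by
  have hlt : exp 1 ^ (-(1 / γ)) < exp (-(2 * γ)⁻¹) := by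
    rw [exp_one_rpow, exp_lt_exp, neg_lt_neg_iff, one_div]
    exact inv_strictAnti₀ hγ (by linarith)
  obtain ⟨T₀, hT₀⟩ := eventually_atTop.1 (hRV.eventually_lt_const hlt)
  have hstep : ∀ z ≥ max T₀ 1, g (exp 1 * z) ≤ exp (-(2 * γ)⁻¹) * g z := fun z hz =>
    ((div_lt_iff₀ (hgpos z)).1 (hT₀ z (le_of_max_le_left hz))).le
  filter_upwards [eventually_ge_atTop (max T₀ 1)] with t ht s hs
  rw [div_le_iff₀ (hgpos t)]
  exact hg.apply_mul_exp_le (by positivity) (lt_max_of_lt_right one_pos) hstep ht (hgpos t).le hs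

theorem tendsto_integral_apply_mul_exp_div (hγ : 0 < γ) (hg : Antitone g)
    (hgpos : ∀ z, 0 < g z)
    (hRV : ∀ x > 0, Tendsto (fun z => g (x * z) / g z) atTop (𝓝 (x ^ (-(1 / γ))))) :
    Tendsto (fun t => ∫ s in Ioi 0, g (t * exp s) / g t) atTop (𝓝 γ) := by
  have hlimit : ∫ s in Ioi 0, exp (-(1 / γ) * s) = γ := by
    rw [integral_exp_mul_Ioi (by simpa using hγ) 0]
    simp
  rw [← hlimit]
  refine tendsto_integral_filter_of_dominated_convergence
    (fun s => exp (2 * γ)⁻¹ * exp (-(2 * γ)⁻¹ * s)) ?_ ?_ ?_ ?_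
  · filter_upwards [eventually_ge_atTop 0] with t ht
    have hanti : Antitone fun s => g (t * exp s) := fun a b hab => hg (by gcongr)
    exact (hanti.measurable.div_const _).aestronglyMeasurable
  · filter_upwards [eventually_apply_mul_exp_div_le hγ hg hgpos (hRV _ (exp_pos 1))] with t ht
    refine ae_restrict_of_forall_mem measurableSet_Ioi fun s hs => ?_
    rw [norm_of_nonneg (div_nonneg (hgpos _).le (hgpos t).le)]
    exact ht s (le_of_lt hs)
  · exact (exp_neg_integrableOn_Ioi 0 (by positivity)).const_mul _
  · refine ae_of_all _ fun s => ?_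
    convert hRV (exp s) (exp_pos s) using 2 with t
    · rw [mul_comm]
    · rw [← exp_mul, mul_comm]

end RegularVariation

theorem mean_excess_log_limit_general
    (FF : ℝ → ℝ) (γ₁ : ℝ) (hγ₁ : 0 < γ₁)
    (hFFmono : Monotone FF) (hFFtop : Tendsto FF atTop (nhds 1))
    (hFFlt : ∀ z : ℝ, FF z < 1)
    (hRVF : ∀ x > (0 : ℝ),
      Tendsto (fun z => (1 - FF (x * z)) / (1 - FF z)) atTop (nhds (x ^ (-(1 / γ₁)))))
    (μF : Measure ℝ) (hμF : ∀ b, μF (Set.Iic b) = ENNReal.ofReal (FF b)) :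
    Tendsto (fun t => (1 - FF t)⁻¹ * ∫ x in Set.Ioi t, Real.log (x / t) ∂μF)
      atTop (nhds γ₁) := by
  have := isProbabilityMeasure_of_measure_Iic hμF hFFtop
  have hsurv_anti : Antitone fun z => 1 - FF z := fun a b hab => sub_le_sub_left (hFFmono hab) 1
  refine (tendsto_integral_apply_mul_exp_div hγ₁ hsurv_anti (fun z => sub_pos.2 (hFFlt z))
    hRVF).congr' ?_
  filter_upwards [eventually_gt_atTop 0, hFFtop.eventually_const_le one_pos] with t ht hFt
  rw [setIntegral_log_div_eq_integral_measureReal_Ioi μF ht, ← integral_const_mul]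
  refine setIntegral_congr_fun measurableSet_Ioi fun s hs => ?_
  have hts : t ≤ t * exp s := le_mul_of_one_le_right ht.le (one_le_exp (le_of_lt hs))
  rw [measureReal_Ioi_eq_one_sub hμF (hFt.trans (hFFmono hts)), inv_mul_eq_div]

/-- If `𝐅` is a continuous distribution function on `[0,∞)` whose survival
function `𝐅̄ := 1 − 𝐅` is positive and regularly varying at infinity with index `−1/γ₁`
(`γ₁ > 0`), then `(1/𝐅̄(t)) ∫_{(t,∞)} log(x/t) dμ_𝐅(x) → γ₁` as `t → ∞`. -/
theorem mean_excess_log_limit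
    (FF : ℝ → ℝ) (γ₁ : ℝ) (hγ₁ : 0 < γ₁)
    (hFFmono : Monotone FF) (hFFcont : Continuous FF)
    (hFF0 : ∀ x ≤ (0 : ℝ), FF x = 0) (hFFtop : Tendsto FF atTop (nhds 1))
    (hFFlt : ∀ z : ℝ, FF z < 1)
    (hRVF : ∀ x > (0 : ℝ),
      Tendsto (fun z => (1 - FF (x * z)) / (1 - FF z)) atTop (nhds (x ^ (-(1 / γ₁)))))
    (μF : Measure ℝ) (hμF : ∀ b, μF (Set.Iic b) = ENNReal.ofReal (FF b)) :
    Tendsto (fun t => (1 - FF t)⁻¹ * ∫ x in Set.Ioi t, Real.log (x / t) ∂μF)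
      atTop (nhds γ₁) :=
  mean_excess_log_limit_general FF γ₁ hγ₁ hFFmono hFFtop hFFlt hRVF μF hμF
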